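/- Let f₁,…,f_m ∈ ℝ[x₁,…,x_d] be nonzero polynomials, let w ∈ ℝ^d, and set g(w) = (g₁(w),…,g_m(w)) ∈ ℝ^m where g_i(w) = min_{a ∈ supp(f_i)} ⟨w,a⟩. Then for every nonzero φ ∈ ℝ[p₁,…,p_m] with φ(f₁,…,f_m) = 0, the initial form in_{g(w)}(φ) is not a monomial (i.e., it has at least two terms with nonzero coefficient). Consequently, the image of the tropicalization g is contained in the tropical variety of the vanishing ideal I_f = {φ : φ(f₁,…,f_m) = 0}. -/

import Mathlib

open MvPolynomial

/-- The `w`-weight of an exponent vector `α`: `⟨w, α⟩ = Σᵢ wᵢ αᵢ`. -/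
noncomputable def wt {σ : Type*} [Fintype σ] (w : σ → ℝ) (α : σ →₀ ℕ) : ℝ :=
  ∑ i, w i * (α i : ℝ)

/-- The initial form `in_w(φ)`: the sum of the terms of `φ` of minimal `w`-weight. -/
noncomputable def initForm {σ : Type*} [Fintype σ] (w : σ → ℝ)
    (φ : MvPolynomial σ ℝ) : MvPolynomial σ ℝ :=
  ∑ α ∈ φ.support.filter (fun α => ∀ β ∈ φ.support, wt w α ≤ wt w β),
    MvPolynomial.monomial α (φ.coeff α)

/-- The tropicalization of the polynomial map `f = (f₁,…,f_m)`:
`g(w)ᵢ = min_{a ∈ supp(fᵢ)} ⟨w,a⟩`. -/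
noncomputable def tropMap (d m : ℕ) (f : Fin m → MvPolynomial (Fin d) ℝ)
    (w : Fin d → ℝ) : Fin m → ℝ :=
  fun i => sInf (wt w '' ((f i).support : Set (Fin d →₀ ℕ)))

/-- The tropical variety of an ideal (given as a set of polynomials): all weight vectors `v`
such that no nonzero element of the set has a monomial initial form. -/
def tropicalVariety (m : ℕ) (I : Set (MvPolynomial (Fin m) ℝ)) : Set (Fin m → ℝ) :=
  {v | ∀ φ ∈ I, φ ≠ 0 → (initForm v φ).support.card ≠ 1}

variable {σ : Type*} [Fintype σ] (w : σ → ℝ)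

lemma wt_add (α β : σ →₀ ℕ) : wt w (α + β) = wt w α + wt w β := by
  simp [wt, mul_add, Finset.sum_add_distrib]

lemma wt_zero : wt w (0 : σ →₀ ℕ) = 0 := by simp [wt]

/-- `h` is the weight-`a` part of `p`, and everything else in `p` has weight `> a`. -/
def Approx (a : ℝ) (p h : MvPolynomial σ ℝ) : Prop :=
  (∀ γ ∈ h.support, wt w γ = a) ∧ (∀ γ ∈ (p - h).support, a < wt w γ)

lemma Approx.supp_ge {a : ℝ} {p h : MvPolynomial σ ℝ} (hp : Approx w a p h) :
    ∀ γ ∈ p.support, a ≤ wt w γ := by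
  intro γ hγ
  rw [mem_support_iff] at hγ
  by_cases h1 : γ ∈ h.support
  · exact (hp.1 γ h1).ge
  · have : γ ∈ (p - h).support := by
      rw [mem_support_iff] at h1 ⊢
      simp only [coeff_sub]
      simpa [not_not.mp h1] using hγ
    exact (hp.2 γ this).le

lemma Approx.zero : Approx w a (0 : MvPolynomial σ ℝ) 0 := by
  constructor <;> simp

lemma Approx.mul {a b : ℝ} {p h q k : MvPolynomial σ ℝ}
    (hp : Approx w a p h) (hq : Approx w b q k) : Approx w (a + b) (p * q) (h * k) := by
  classical
  constructor
  · intro γ hγ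
    obtain ⟨γ1, h1, γ2, h2, rfl⟩ := Finset.mem_add.mp (MvPolynomial.support_mul _ _ hγ)
    rw [wt_add, hp.1 γ1 h1, hq.1 γ2 h2]
  · intro γ hγ
    have hexp : p * q - h * k = (p - h) * q + h * (q - k) := by ring
    rw [hexp] at hγ
    have := Finset.mem_union.mp (MvPolynomial.support_add hγ)
    rcases this with h' | h'
    · obtain ⟨γ1, h1, γ2, h2, rfl⟩ := Finset.mem_add.mp (MvPolynomial.support_mul _ _ h')
      rw [wt_add]
      exact add_lt_add_of_lt_of_le (hp.2 γ1 h1) (Approx.supp_ge w hq γ2 h2)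
    · obtain ⟨γ1, h1, γ2, h2, rfl⟩ := Finset.mem_add.mp (MvPolynomial.support_mul _ _ h')
      rw [wt_add, hp.1 γ1 h1]
      linarith [hq.2 γ2 h2]

lemma Approx.one : Approx w 0 (1 : MvPolynomial σ ℝ) 1 := by
  classical
  constructor
  · intro γ hγ
    rw [mem_support_iff] at hγ
    have : γ = 0 := by
      by_contra hne
      exact hγ (by rw [← C_1, coeff_C, if_neg (fun h => hne h.symm)])
    rw [this, wt_zero]
  · simp

lemma Approx.pow {a : ℝ} {p h : MvPolynomial σ ℝ} (hp : Approx w a p h) (n : ℕ) :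
    Approx w (n * a) (p ^ n) (h ^ n) := by
  induction n with
  | zero => simpa using Approx.one w
  | succ n ih =>
    have := (Approx.mul w ih hp)
    rw [pow_succ, pow_succ]
    have harg : ((n : ℝ) + 1) * a = (n : ℝ) * a + a := by ring
    rw [Nat.cast_succ, harg]
    exact this

lemma Approx.add {a : ℝ} {p h q k : MvPolynomial σ ℝ}
    (hp : Approx w a p h) (hq : Approx w a q k) : Approx w a (p + q) (h + k) := by
  classical
  constructor
  · intro γ hγ
    rcases Finset.mem_union.mp (MvPolynomial.support_add hγ) with h' | h'
    · exact hp.1 γ h'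
    · exact hq.1 γ h'
  · intro γ hγ
    have : p + q - (h + k) = (p - h) + (q - k) := by ring
    rw [this] at hγ
    rcases Finset.mem_union.mp (MvPolynomial.support_add hγ) with h' | h'
    · exact hp.2 γ h'
    · exact hq.2 γ h'

lemma Approx.weaken {a μ : ℝ} {p h : MvPolynomial σ ℝ}
    (hp : Approx w a p h) (hμ : μ < a) : Approx w μ p 0 := by
  constructor
  · simp
  · intro γ hγ
    rw [sub_zero] at hγ
    exact lt_of_lt_of_le hμ (Approx.supp_ge w hp γ hγ)

lemma Approx.cmul {a : ℝ} (c : ℝ) {p h : MvPolynomial σ ℝ}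
    (hp : Approx w a p h) : Approx w a (C c * p) (C c * h) := by
  constructor
  · intro γ hγ
    have : γ ∈ h.support := by
      rw [mem_support_iff] at hγ ⊢
      intro h0
      exact hγ (by simp [coeff_C_mul, h0])
    exact hp.1 γ this
  · intro γ hγ
    have hre : C c * p - C c * h = C c * (p - h) := by ring
    rw [hre] at hγ
    have : γ ∈ (p - h).support := by
      rw [mem_support_iff] at hγ ⊢
      intro h0
      exact hγ (by simp [coeff_C_mul, h0])
    exact hp.2 γ this

lemma Approx.sum {ι : Type*} (s : Finset ι) {a : ℝ} {p h : ι → MvPolynomial σ ℝ}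
    (hp : ∀ i ∈ s, Approx w a (p i) (h i)) :
    Approx w a (∑ i ∈ s, p i) (∑ i ∈ s, h i) := by
  classical
  induction s using Finset.induction with
  | empty => simpa using Approx.zero w
  | insert _ _ hni ih =>
    rw [Finset.sum_insert hni, Finset.sum_insert hni]
    exact Approx.add w (hp _ (Finset.mem_insert_self _ _))
      (ih fun i hi => hp i (Finset.mem_insert_of_mem hi))

lemma Approx.prod {ι : Type*} (s : Finset ι) {a : ι → ℝ} {p h : ι → MvPolynomial σ ℝ}
    (hp : ∀ i ∈ s, Approx w (a i) (p i) (h i)) :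
    Approx w (∑ i ∈ s, a i) (∏ i ∈ s, p i) (∏ i ∈ s, h i) := by
  classical
  induction s using Finset.induction with
  | empty => simpa using Approx.one w
  | insert _ _ hni ih =>
    rw [Finset.sum_insert hni, Finset.prod_insert hni, Finset.prod_insert hni]
    exact Approx.mul w (hp _ (Finset.mem_insert_self _ _))
      (ih fun i hi => hp i (Finset.mem_insert_of_mem hi))

lemma coeff_initForm (φ : MvPolynomial σ ℝ) (γ : σ →₀ ℕ) :
    coeff γ (initForm w φ) =
      if γ ∈ φ.support.filter (fun α => ∀ β ∈ φ.support, wt w α ≤ wt w β)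
      then φ.coeff γ else 0 := by
  classical
  rw [initForm, coeff_sum]
  simp only [coeff_monomial]
  rw [Finset.sum_ite_eq' _ γ (fun α => φ.coeff α)]
  congr 1

lemma support_initForm (φ : MvPolynomial σ ℝ) :
    (initForm w φ).support =
      φ.support.filter (fun α => ∀ β ∈ φ.support, wt w α ≤ wt w β) := by
  classical
  ext γ
  rw [mem_support_iff, coeff_initForm]
  constructor
  · intro h
    by_contra hn
    exact h (if_neg hn)
  · intro h
    rw [if_pos h]
    exact mem_support_iff.mp (Finset.mem_filter.mp h).1

lemma csInf_wt_le {f : MvPolynomial σ ℝ} {γ : σ →₀ ℕ} (hγ : γ ∈ f.support) :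
    sInf (wt w '' (f.support : Set (σ →₀ ℕ))) ≤ wt w γ :=
  csInf_le ((f.support.finite_toSet.image _).bddBelow) ⟨γ, hγ, rfl⟩

lemma approx_self (f : MvPolynomial σ ℝ) (hf : f ≠ 0) :
    Approx w (sInf (wt w '' (f.support : Set (σ →₀ ℕ)))) f (initForm w f) := by
  classical
  set v := sInf (wt w '' (f.support : Set (σ →₀ ℕ))) with hv
  have hne : (wt w '' (f.support : Set (σ →₀ ℕ))).Nonempty := by
    obtain ⟨γ, hγ⟩ := Finset.nonempty_iff_ne_empty.mpr
      (fun h => hf (support_eq_empty.mp h))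
    exact ⟨wt w γ, γ, hγ, rfl⟩
  obtain ⟨γ0, hγ0, hwγ0⟩ := hne.csInf_mem (f.support.finite_toSet.image _)
  constructor
  · intro γ hγ
    rw [support_initForm, Finset.mem_filter] at hγ
    have h1 : wt w γ ≤ v := by rw [hv, ← hwγ0]; exact hγ.2 γ0 (Finset.mem_coe.mp hγ0)
    exact le_antisymm h1 (csInf_wt_le w hγ.1)
  · intro γ hγ
    rw [mem_support_iff, coeff_sub, coeff_initForm] at hγ
    by_cases hins : γ ∈ f.support.filter (fun α => ∀ β ∈ f.support, wt w α ≤ wt w β)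
    · rw [if_pos hins] at hγ; simp at hγ
    · rw [if_neg hins, sub_zero] at hγ
      have hγs : γ ∈ f.support := mem_support_iff.mpr hγ
      rw [Finset.mem_filter] at hins
      push_neg at hins
      obtain ⟨β, hβ, hlt⟩ := hins hγs
      exact lt_of_le_of_lt (csInf_wt_le w hβ) hlt

lemma initForm_ne_zero (f : MvPolynomial σ ℝ) (hf : f ≠ 0) : initForm w f ≠ 0 := by
  classical
  intro h0
  obtain ⟨γ0, hγ0⟩ := Finset.exists_min_image f.support (wt w)
    (Finset.nonempty_iff_ne_empty.mpr (fun h => hf (support_eq_empty.mp h)))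
  have : γ0 ∈ (initForm w f).support := by
    rw [support_initForm, Finset.mem_filter]
    exact hγ0
  rw [h0] at this
  simp at this

lemma wt_eq_sum (v : σ → ℝ) (β : σ →₀ ℕ) : wt v β = ∑ i, (β i : ℝ) * v i := by
  simp [wt, mul_comm]

lemma main_key (d m : ℕ) (f : Fin m → MvPolynomial (Fin d) ℝ) (hf : ∀ i, f i ≠ 0)
    (w : Fin d → ℝ) (φ : MvPolynomial (Fin m) ℝ) (hφ : φ ≠ 0)
    (hval : MvPolynomial.aeval f φ = 0) :
    2 ≤ (initForm (fun i => sInf (wt w '' ((f i).support : Set (Fin d →₀ ℕ)))) φ).support.card := by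
  classical
  set v : Fin m → ℝ := fun i => sInf (wt w '' ((f i).support : Set (Fin d →₀ ℕ))) with hv
  set sφ := φ.support.filter (fun α => ∀ β ∈ φ.support, wt v α ≤ wt v β) with hsφ
  obtain ⟨α0, hα0s, hα0min⟩ := Finset.exists_min_image φ.support (wt v)
    (Finset.nonempty_iff_ne_empty.mpr (fun h => hφ (support_eq_empty.mp h)))
  set μ := wt v α0 with hμ
  have hμle : ∀ β ∈ φ.support, μ ≤ wt v β := hα0min
  have hsφ_wt : ∀ β ∈ sφ, wt v β = μ := by
    intro β hβ
    rw [hsφ, Finset.mem_filter] at hβ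
    exact le_antisymm (hβ.2 α0 hα0s) (hμle β hβ.1)
  -- initial forms of the f i
  set g : Fin m → MvPolynomial (Fin d) ℝ := fun i => initForm w (f i) with hg
  have hAf : ∀ i, Approx w (v i) (f i) (g i) := fun i => approx_self w (f i) (hf i)
  -- per-monomial approximation
  have hterm : ∀ β : Fin m →₀ ℕ,
      Approx w (wt v β) (C (coeff β φ) * ∏ i, f i ^ β i) (C (coeff β φ) * ∏ i, g i ^ β i) := by
    intro β
    have := Approx.prod w (a := fun i => (β i : ℝ) * v i)
      (p := fun i => f i ^ β i) (h := fun i => g i ^ β i) Finset.univ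
      (fun i _ => Approx.pow w (hAf i) (β i))
    rw [← wt_eq_sum] at this
    exact Approx.cmul w _ this
  -- expand aeval
  have hexpand : MvPolynomial.aeval f φ = ∑ β ∈ φ.support, C (coeff β φ) * ∏ i, f i ^ β i := by
    rw [MvPolynomial.aeval_def, MvPolynomial.eval₂_eq']
    rfl
  set Hsum := ∑ β ∈ sφ, C (coeff β φ) * ∏ i, g i ^ β i with hHsum
  have hsplit : ∑ β ∈ φ.support, C (coeff β φ) * ∏ i, f i ^ β i
      = (∑ β ∈ sφ, C (coeff β φ) * ∏ i, f i ^ β i)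
        + ∑ β ∈ φ.support.filter (fun α => ¬ ∀ β ∈ φ.support, wt v α ≤ wt v β),
            C (coeff β φ) * ∏ i, f i ^ β i := by
    rw [hsφ]
    exact (Finset.sum_filter_add_sum_filter_not _ _ _).symm
  have hA1 : Approx w μ (∑ β ∈ sφ, C (coeff β φ) * ∏ i, f i ^ β i) Hsum := by
    apply Approx.sum
    intro β hβ
    have := hterm β
    rwa [hsφ_wt β hβ] at this
  have hA2 : Approx w μ (∑ β ∈ φ.support.filter (fun α => ¬ ∀ β ∈ φ.support, wt v α ≤ wt v β),
      C (coeff β φ) * ∏ i, f i ^ β i) 0 := by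
    have := Approx.sum w (φ.support.filter (fun α => ¬ ∀ β ∈ φ.support, wt v α ≤ wt v β))
      (a := μ) (p := fun β => C (coeff β φ) * ∏ i, f i ^ β i) (h := fun _ => 0) ?_
    · simpa using this
    · intro β hβ
      rw [Finset.mem_filter] at hβ
      push_neg at hβ
      obtain ⟨β', hβ', hlt⟩ := hβ.2
      have hmu_lt : μ < wt v β := lt_of_le_of_lt (hμle β' hβ') hlt
      exact Approx.weaken w (hterm β) hmu_lt
  have hAll : Approx w μ (MvPolynomial.aeval f φ) Hsum := by
    rw [hexpand, hsplit]
    have := Approx.add w hA1 hA2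
    rwa [add_zero] at this
  rw [hval] at hAll
  -- Hsum must vanish
  have hHzero : Hsum = 0 := by
    by_contra hH
    obtain ⟨γ, hγ⟩ := Finset.nonempty_iff_ne_empty.mpr
      (fun h => hH (support_eq_empty.mp h))
    have h1 : wt w γ = μ := hAll.1 γ hγ
    have h2 : μ < wt w γ := by
      apply hAll.2
      rw [zero_sub, support_neg]
      exact hγ
    rw [h1] at h2; exact lt_irrefl _ h2
  -- support of initForm is sφ
  have hsupp : (initForm v φ).support = sφ := support_initForm v φ
  have hcard0 : sφ.Nonempty := ⟨α0, Finset.mem_filter.mpr ⟨hα0s, fun β hβ => hμle β hβ⟩⟩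
  have hcard1 : sφ.card ≠ 1 := by
    intro hc
    obtain ⟨α1, hα1⟩ := Finset.card_eq_one.mp hc
    have hα1s : α1 ∈ sφ := by rw [hα1]; exact Finset.mem_singleton_self α1
    have hcoeff : coeff α1 φ ≠ 0 :=
      mem_support_iff.mp (Finset.mem_filter.mp (hsφ ▸ hα1s)).1
    have : Hsum = C (coeff α1 φ) * ∏ i, g i ^ α1 i := by
      rw [hHsum, hα1, Finset.sum_singleton]
    rw [hHzero] at this
    have hne : C (coeff α1 φ) * ∏ i, g i ^ α1 i ≠ 0 := by
      apply mul_ne_zero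
      · simpa using hcoeff
      · apply Finset.prod_ne_zero_iff.mpr
        intro i _
        exact pow_ne_zero _ (initForm_ne_zero w (f i) (hf i))
    exact hne this.symm
  rw [hsupp]
  have hpos := Finset.card_pos.mpr hcard0
  omega


/-- For nonzero polynomials `f₁,…,f_m` and any `w`, every nonzero `φ` with `φ(f₁,…,f_m) = 0`
has initial form `in_{g(w)}(φ)` which is not a monomial (it has at least two terms);
consequently the image of the tropicalization `g` is contained in the tropical variety of the
vanishing ideal `I_f`. -/
theorem image_of_tropicalization_in_tropical_variety
    (d m : ℕ) (f : Fin m → MvPolynomial (Fin d) ℝ) (hf : ∀ i, f i ≠ 0) :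
    (∀ (w : Fin d → ℝ) (φ : MvPolynomial (Fin m) ℝ), φ ≠ 0 →
      MvPolynomial.aeval f φ = 0 →
      2 ≤ (initForm (tropMap d m f w) φ).support.card) ∧
    Set.range (tropMap d m f) ⊆
      tropicalVariety m {φ | MvPolynomial.aeval f φ = 0} := by
  have key : ∀ (w : Fin d → ℝ) (φ : MvPolynomial (Fin m) ℝ), φ ≠ 0 →
      MvPolynomial.aeval f φ = 0 →
      2 ≤ (initForm (tropMap d m f w) φ).support.card := by
    intro w φ hφ hval
    exact main_key d m f hf w φ hφ hval
  refine ⟨key, ?_⟩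
  rintro v ⟨w, rfl⟩ φ hφmem hφ0
  have := key w φ hφ0 hφmem
  omega
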